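/- Let G be a group acting on a set X, let s₁, s₂ ∈ G, set s₀ := s₁ * s₂, and assume s₀² = 1, s₀ ≠ 1, s₁ ≠ 1, s₂ ≠ 1 and that the cyclic subgroups ⟨s₀⟩, ⟨s₁⟩, ⟨s₂⟩ intersect pairwise trivially. Let v ∈ X have trivial stabilizer, and define the base edges e₀, e₁, e₂ and base faces F₂⁰ := {e₀, e₁, s₁ • e₂}, F₂¹ := {s₁ᵏ • e₁ : k ∈ ℤ}, F₂² := {s₂ᵏ • e₂ : k ∈ ℤ}. Then the G-orbits of F₂⁰, F₂¹, F₂² are pairwise disjoint: for all g, h ∈ G and all i ≠ j in {0, 1, 2}, g • F₂^i ≠ h • F₂^j. Hence every face of the snub has a uniquely determined type. -/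

import Mathlib

open Pointwise

/-- The base edges of the snub: `e₀ = {v, (s₁s₂)•v}`, `e₁ = {v, s₁•v}`, `e₂ = {v, s₂•v}`. -/
def snubBaseEdge {G X : Type*} [Group G] [MulAction G X] (s₁ s₂ : G) (v : X) :
    Fin 3 → Set X :=
  ![{v, (s₁ * s₂) • v}, {v, s₁ • v}, {v, s₂ • v}]

/-- The base faces of the snub: `F₂⁰ = {e₀, e₁, s₁ • e₂}`, `F₂¹ = {s₁ᵏ • e₁ : k ∈ ℤ}`,
`F₂² = {s₂ᵏ • e₂ : k ∈ ℤ}`. -/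
def snubBaseFace {G X : Type*} [Group G] [MulAction G X] (s₁ s₂ : G) (v : X) :
    Fin 3 → Set (Set X) :=
  ![{snubBaseEdge s₁ s₂ v 0, snubBaseEdge s₁ s₂ v 1, s₁ • snubBaseEdge s₁ s₂ v 2},
    {E | ∃ k : ℤ, E = s₁ ^ k • snubBaseEdge s₁ s₂ v 1},
    {E | ∃ k : ℤ, E = s₂ ^ k • snubBaseEdge s₁ s₂ v 2}]

/-!
Compare vertex sets: `g • F₂^i = h • F₂^j` makes the union of `F₂^i` a translate of the union
of `F₂^j`. The vertex sets of `F₂¹` and `F₂²` are the orbits `⟨s₁⟩ • v` and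
`⟨s₂⟩ • v`, and since `v` has trivial stabilizer, two vertices `v` and `x • v` lie in a
translate of `⟨s⟩ • v` only if `x ∈ ⟨s⟩`. But `F₂⁰` contains `v`, `s₀ • v` and `s₁ • v`, and
`F₂¹` contains `v` and `s₁ • v`, while `s₀ ∉ ⟨s₁⟩` and `s₁ ∉ ⟨s₂⟩`.
-/

section

variable {G X : Type*} [Group G] [MulAction G X]

theorem Set.sUnion_smul_set (g : G) (F : Set (Set X)) : ⋃₀ (g • F) = g • ⋃₀ F := by
  rw [Set.smul_set_sUnion]
  exact Set.sUnion_image _ _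

theorem Subgroup.notMem_zpowers_of_inf_eq_bot {x s : G} (hx : x ≠ 1)
    (h : Subgroup.zpowers x ⊓ Subgroup.zpowers s = ⊥) : x ∉ Subgroup.zpowers s := fun hxs ↦
  hx <| (Subgroup.mem_bot).mp <| h ▸ ⟨Subgroup.mem_zpowers x, hxs⟩

theorem sUnion_zpow_smul_pair (s : G) (v : X) :
    ⋃₀ {E | ∃ k : ℤ, E = s ^ k • ({v, s • v} : Set X)} = Set.range fun k : ℤ ↦ s ^ k • v := by
  ext x
  simp only [Set.mem_sUnion, Set.mem_ofPred_eq, Set.mem_range]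
  constructor
  · rintro ⟨_, ⟨k, rfl⟩, hx⟩
    rw [Set.smul_set_insert, Set.smul_set_singleton] at hx
    rcases hx with rfl | rfl
    · exact ⟨k, rfl⟩
    · exact ⟨k + 1, by rw [zpow_add_one, mul_smul]⟩
  · rintro ⟨k, rfl⟩
    exact ⟨_, ⟨k, rfl⟩, Set.smul_mem_smul_set (Set.mem_insert v _)⟩

theorem ne_smul_range_zpow_smul {v : X} (hv : ∀ g : G, g • v = v → g = 1) {A : Set X} {x s : G}
    (hvA : v ∈ A) (hxA : x • v ∈ A) (hx : x ∉ Subgroup.zpowers s) (t : G) :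
    A ≠ t • Set.range fun k : ℤ ↦ s ^ k • v := by
  rintro rfl
  obtain ⟨_, ⟨k, rfl⟩, hk⟩ := hvA
  obtain ⟨_, ⟨m, rfl⟩, hm⟩ := hxA
  have ht : t * s ^ k = 1 := hv _ (by rwa [mul_smul])
  have hxt : (t * s ^ m)⁻¹ * x = 1 := hv _ (by rw [mul_smul, ← hm]; simp [mul_smul])
  have : x = s ^ (m - k) := by
    rw [← inv_mul_eq_one.mp hxt, eq_inv_of_mul_eq_one_left ht, zpow_sub]; group
  exact hx (this ▸ Subgroup.zpow_mem_zpowers s _)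

theorem sUnion_snubBaseFace_zero (s₁ s₂ : G) (v : X) :
    ⋃₀ snubBaseFace s₁ s₂ v 0 = {v, (s₁ * s₂) • v, s₁ • v} := by
  ext x
  simp only [snubBaseFace, snubBaseEdge, Matrix.cons_val, Set.sUnion_insert, Set.sUnion_singleton,
    Set.smul_set_insert, Set.smul_set_singleton, smul_smul, Set.mem_union, Set.mem_insert_iff,
    Set.mem_singleton_iff]
  tauto

theorem sUnion_snubBaseFace_one (s₁ s₂ : G) (v : X) :
    ⋃₀ snubBaseFace s₁ s₂ v 1 = Set.range fun k : ℤ ↦ s₁ ^ k • v :=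
  sUnion_zpow_smul_pair s₁ v

theorem sUnion_snubBaseFace_two (s₁ s₂ : G) (v : X) :
    ⋃₀ snubBaseFace s₁ s₂ v 2 = Set.range fun k : ℤ ↦ s₂ ^ k • v :=
  sUnion_zpow_smul_pair s₂ v

end

theorem snub_faces_have_unique_type_general {G X : Type*} [Group G] [MulAction G X]
    (s₁ s₂ : G) (hs0 : s₁ * s₂ ≠ 1) (hs1 : s₁ ≠ 1)
    (h01 : Subgroup.zpowers (s₁ * s₂) ⊓ Subgroup.zpowers s₁ = ⊥)
    (h12 : Subgroup.zpowers s₁ ⊓ Subgroup.zpowers s₂ = ⊥)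
    (v : X) (hv : ∀ g : G, g • v = v → g = 1) :
    ∀ (g h : G) (i j : Fin 3), i ≠ j →
      g • snubBaseFace s₁ s₂ v i ≠ h • snubBaseFace s₁ s₂ v j := by
  intro g h i j hij heq
  wlog hlt : i < j generalizing g h i j
  · exact this h g j i hij.symm heq.symm (hij.symm.lt_of_le (not_lt.mp hlt))
  have hV : ⋃₀ snubBaseFace s₁ s₂ v i = (g⁻¹ * h) • ⋃₀ snubBaseFace s₁ s₂ v j := by
    rw [← Set.sUnion_smul_set, mul_smul, ← heq, inv_smul_smul]
  have hs0' := Subgroup.notMem_zpowers_of_inf_eq_bot hs0 h01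
  have hs1' := Subgroup.notMem_zpowers_of_inf_eq_bot hs1 h12
  obtain ⟨rfl, rfl⟩ | ⟨rfl, rfl⟩ | ⟨rfl, rfl⟩ :
      i = 0 ∧ j = 1 ∨ i = 0 ∧ j = 2 ∨ i = 1 ∧ j = 2 := by omega
  · rw [sUnion_snubBaseFace_zero, sUnion_snubBaseFace_one] at hV
    exact ne_smul_range_zpow_smul hv (by simp) (by simp) hs0' _ hV
  · rw [sUnion_snubBaseFace_zero, sUnion_snubBaseFace_two] at hV
    exact ne_smul_range_zpow_smul hv (by simp) (by simp) hs1' _ hV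
  · rw [sUnion_snubBaseFace_one, sUnion_snubBaseFace_two] at hV
    refine ne_smul_range_zpow_smul hv ?_ ?_ hs1' _ hV
    exacts [⟨0, by simp⟩, ⟨1, by simp⟩]

/-- With `s₀ := s₁s₂` an involution, `s₀, s₁, s₂` nontrivial, the cyclic subgroups they
generate intersecting pairwise trivially, and `v` a point with trivial stabilizer, the
`G`-orbits of the three base faces `F₂⁰, F₂¹, F₂²` are pairwise disjoint: every face of the
snub has a uniquely determined type. -/
theorem snub_faces_have_unique_type {G X : Type*} [Group G] [MulAction G X]
    (s₁ s₂ : G) (h0 : (s₁ * s₂) ^ 2 = 1)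
    (hs0 : s₁ * s₂ ≠ 1) (hs1 : s₁ ≠ 1) (hs2 : s₂ ≠ 1)
    (h01 : Subgroup.zpowers (s₁ * s₂) ⊓ Subgroup.zpowers s₁ = ⊥)
    (h02 : Subgroup.zpowers (s₁ * s₂) ⊓ Subgroup.zpowers s₂ = ⊥)
    (h12 : Subgroup.zpowers s₁ ⊓ Subgroup.zpowers s₂ = ⊥)
    (v : X) (hv : ∀ g : G, g • v = v → g = 1) :
    ∀ (g h : G) (i j : Fin 3), i ≠ j →
      g • snubBaseFace s₁ s₂ v i ≠ h • snubBaseFace s₁ s₂ v j :=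
  snub_faces_have_unique_type_general s₁ s₂ hs0 hs1 h01 h12 v hv
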